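/- For each k = 1,…,n let f_k : ℝ^d × (ℝ^d)^k → ℝ^d be bounded and Lipschitz continuous, and define a(u,μ) := Σ_{k=1}^n ∫_{ℝ^d}⋯∫_{ℝ^d} f_k(u, v₁,…,v_k) μ(dv₁)⋯μ(dv_k) for u ∈ ℝ^d and μ a Borel probability measure on ℝ^d. Then there exists a constant K > 0 such that for all u₁, u₂ ∈ ℝ^d and all Borel probability measures μ, ν on ℝ^d: |a(u₁,μ) − a(u₂,ν)| ≤ K(|u₁ − u₂| + γ(μ,ν)). -/

import Mathlib

open MeasureTheory

/-- The set of couplings of two Borel probability measures on `ℝᵈ`. -/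
def couplings {d : ℕ} (μ ν : Measure (EuclideanSpace ℝ (Fin d))) :
    Set (Measure (EuclideanSpace ℝ (Fin d) × EuclideanSpace ℝ (Fin d))) :=
  {κ | IsProbabilityMeasure κ ∧ κ.map Prod.fst = μ ∧ κ.map Prod.snd = ν}

/-- The bounded Wasserstein-type distance
`γ(μ,ν) = inf_{κ ∈ C(μ,ν)} ∬ |u−v|/(1+|u−v|) κ(du,dv)`. -/
noncomputable def gammaDist {d : ℕ} (μ ν : Measure (EuclideanSpace ℝ (Fin d))) : ℝ :=
  ⨅ κ : couplings μ ν, ∫ p : EuclideanSpace ℝ (Fin d) × EuclideanSpace ℝ (Fin d),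
    ‖p.1 - p.2‖ / (1 + ‖p.1 - p.2‖) ∂(κ : Measure _)

local notation "E" d => EuclideanSpace ℝ (Fin d)

lemma myPiMapEval {ι : Type*} [Fintype ι] {α : Type*} [MeasurableSpace α] (μ : Measure α)
    [IsProbabilityMeasure μ] (i : ι) :
    (Measure.pi fun _ : ι => μ).map (fun p => p i) = μ := by
  classical
  ext s hs
  rw [Measure.map_apply (measurable_pi_apply i) hs]
  have : (fun p : ι → α => p i) ⁻¹' s
      = Set.pi Set.univ (Function.update (fun _ => Set.univ) i s) := by
    rw [← Set.eval_preimage]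
  rw [this, Measure.pi_pi, Finset.prod_eq_single i]
  · simp
  · intro j _ hj; simp [Function.update_apply, hj]
  · simp

lemma myMinAux (L M t : ℝ) (hL : 0 ≤ L) (hM : 0 ≤ M) (ht : 0 ≤ t) :
    min (2*M) (L*t) ≤ (2*L + 4*M) * (t/(1+t)) := by
  have h1 : (0:ℝ) < 1 + t := by linarith
  rcases le_total t 1 with h | h
  · refine le_trans (min_le_right _ _) ?_
    rw [mul_div_assoc', le_div_iff₀ h1]
    nlinarith [mul_nonneg hL (mul_nonneg ht (sub_nonneg.mpr h)), mul_nonneg hM ht]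
  · refine le_trans (min_le_left _ _) ?_
    rw [mul_div_assoc', le_div_iff₀ h1]
    nlinarith [mul_nonneg hM (sub_nonneg.mpr h), mul_nonneg (mul_nonneg hL ht) ht]

lemma myMinSum {ι : Type*} (s : Finset ι) (a : ℝ) (b : ι → ℝ) (ha : 0 ≤ a)
    (hb : ∀ i, 0 ≤ b i) :
    min a (∑ i ∈ s, b i) ≤ ∑ i ∈ s, min a (b i) := by
  by_cases h : ∃ i ∈ s, a ≤ b i
  · obtain ⟨i, hi, hab⟩ := h
    calc min a (∑ i ∈ s, b i) ≤ a := min_le_left _ _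
      _ = min a (b i) := (min_eq_left hab).symm
      _ ≤ ∑ i ∈ s, min a (b i) :=
        Finset.single_le_sum (fun j _ => le_min ha (hb j)) hi
  · push_neg at h
    have h2 : ∀ i ∈ s, min a (b i) = b i := fun i hi => min_eq_right (h i hi).le
    rw [Finset.sum_congr rfl h2]
    exact min_le_right _ _

lemma myKey (d m : ℕ) (F : (E d) × (Fin m → E d) → E d) (M L : ℝ) (hM : 0 ≤ M) (hL : 0 ≤ L)
    (hbdd : ∀ x, ‖F x‖ ≤ M) (hlip : ∀ x y, ‖F x - F y‖ ≤ L * dist x y)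
    (u₁ u₂ : E d) (μ ν : Measure (E d)) [IsProbabilityMeasure μ] [IsProbabilityMeasure ν]
    (κ : Measure ((E d) × (E d))) [IsProbabilityMeasure κ]
    (h1 : κ.map Prod.fst = μ) (h2 : κ.map Prod.snd = ν) :
    ‖(∫ v, F (u₁, v) ∂(Measure.pi fun _ : Fin m => μ)) -
        ∫ v, F (u₂, v) ∂(Measure.pi fun _ : Fin m => ν)‖ ≤
      L * ‖u₁ - u₂‖ +
        m * ((2*L + 4*M) * ∫ q : (E d) × (E d), ‖q.1 - q.2‖ / (1 + ‖q.1 - q.2‖) ∂κ) := by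
  have hFc : Continuous F := by
    have : LipschitzWith ⟨L, hL⟩ F := by
      apply LipschitzWith.of_dist_le_mul
      intro x y
      rw [dist_eq_norm]
      exact hlip x y
    exact this.continuous
  set g : (E d) × (E d) → ℝ := fun q => ‖q.1 - q.2‖ / (1 + ‖q.1 - q.2‖) with hg
  have hgc : Continuous g := by
    apply Continuous.div (by fun_prop) (by fun_prop)
    intro q; positivity
  have hg0 : ∀ q, 0 ≤ g q := fun q => by positivity
  have hg1 : ∀ q, g q ≤ 1 := fun q => by
    rw [hg]; rw [div_le_one (by positivity)]; linarith [norm_nonneg (q.1 - q.2)]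
  set πκ : Measure (Fin m → (E d) × (E d)) := Measure.pi fun _ => κ with hπκ
  haveI : IsProbabilityMeasure πκ := MeasureTheory.Measure.pi.instIsProbabilityMeasure _
  haveI : BorelSpace (Fin m → (E d) × (E d)) := Pi.borelSpace
  set T1 : (Fin m → (E d) × (E d)) → (Fin m → E d) := fun p i => (p i).1 with hT1d
  set T2 : (Fin m → (E d) × (E d)) → (Fin m → E d) := fun p i => (p i).2 with hT2d
  have hT1 : MeasurePreserving T1 πκ (Measure.pi fun _ => μ) :=
    measurePreserving_pi _ _ (fun _ => ⟨measurable_fst, h1⟩)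
  have hT2 : MeasurePreserving T2 πκ (Measure.pi fun _ => ν) :=
    measurePreserving_pi _ _ (fun _ => ⟨measurable_snd, h2⟩)
  have hT1c : Continuous T1 := by fun_prop
  have hT2c : Continuous T2 := by fun_prop
  have hA : (∫ v, F (u₁, v) ∂(Measure.pi fun _ : Fin m => μ))
      = ∫ p, F (u₁, T1 p) ∂πκ := by
    rw [← hT1.map_eq, integral_map hT1.measurable.aemeasurable]
    exact (hFc.comp (by fun_prop)).aestronglyMeasurable
  have hB : (∫ v, F (u₂, v) ∂(Measure.pi fun _ : Fin m => ν))
      = ∫ p, F (u₂, T2 p) ∂πκ := by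
    rw [← hT2.map_eq, integral_map hT2.measurable.aemeasurable]
    exact (hFc.comp (by fun_prop)).aestronglyMeasurable
  have int1 : Integrable (fun p => F (u₁, T1 p)) πκ :=
    ⟨(hFc.comp (by fun_prop)).aestronglyMeasurable,
      HasFiniteIntegral.of_bounded (ae_of_all _ fun p => hbdd _)⟩
  have int2 : Integrable (fun p => F (u₂, T2 p)) πκ :=
    ⟨(hFc.comp (by fun_prop)).aestronglyMeasurable,
      HasFiniteIntegral.of_bounded (ae_of_all _ fun p => hbdd _)⟩
  rw [hA, hB, ← integral_sub int1 int2]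
  -- the pointwise bound
  have hpt : ∀ p, ‖F (u₁, T1 p) - F (u₂, T2 p)‖ ≤
      L * ‖u₁ - u₂‖ + (2*L + 4*M) * ∑ i : Fin m, g (p i) := by
    intro p
    have e1 : ‖F (u₁, T1 p) - F (u₂, T1 p)‖ ≤ L * ‖u₁ - u₂‖ := by
      refine le_trans (hlip _ _) ?_
      rw [Prod.dist_eq]
      simp [dist_eq_norm]
    have e2 : ‖F (u₂, T1 p) - F (u₂, T2 p)‖ ≤ (2*L + 4*M) * ∑ i : Fin m, g (p i) := by
      have b1 : ‖F (u₂, T1 p) - F (u₂, T2 p)‖ ≤ 2*M := by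
        refine le_trans (norm_sub_le _ _) ?_
        have := hbdd (u₂, T1 p); have := hbdd (u₂, T2 p); linarith
      have b2 : ‖F (u₂, T1 p) - F (u₂, T2 p)‖ ≤
          ∑ i : Fin m, (L * dist ((p i).1) ((p i).2)) := by
        refine le_trans (hlip _ _) ?_
        rw [← Finset.mul_sum]
        refine mul_le_mul_of_nonneg_left ?_ hL
        rw [Prod.dist_eq]
        have hsum : ∀ i : Fin m, dist (T1 p i) (T2 p i) ≤
            ∑ j : Fin m, dist ((p j).1) ((p j).2) := fun i =>
          Finset.single_le_sum (fun j _ => dist_nonneg) (Finset.mem_univ i)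
        have : dist (T1 p) (T2 p) ≤ ∑ j : Fin m, dist ((p j).1) ((p j).2) := by
          refine (dist_pi_le_iff (Finset.sum_nonneg fun j _ => dist_nonneg)).mpr hsum
        rw [dist_self, max_le_iff]
        exact ⟨Finset.sum_nonneg fun j _ => dist_nonneg, this⟩
      calc ‖F (u₂, T1 p) - F (u₂, T2 p)‖
          ≤ min (2*M) (∑ i : Fin m, (L * dist ((p i).1) ((p i).2))) := le_min b1 b2
        _ ≤ ∑ i : Fin m, min (2*M) (L * dist ((p i).1) ((p i).2)) :=
            myMinSum _ _ _ (by linarith) (fun i => by positivity)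
        _ ≤ ∑ i : Fin m, (2*L + 4*M) * g (p i) := by
            refine Finset.sum_le_sum fun i _ => ?_
            have := myMinAux L M (dist ((p i).1) ((p i).2)) hL hM dist_nonneg
            simpa [hg, dist_eq_norm] using this
        _ = (2*L + 4*M) * ∑ i : Fin m, g (p i) := by rw [Finset.mul_sum]
    calc ‖F (u₁, T1 p) - F (u₂, T2 p)‖
        ≤ ‖F (u₁, T1 p) - F (u₂, T1 p)‖ + ‖F (u₂, T1 p) - F (u₂, T2 p)‖ := by
          have : F (u₁, T1 p) - F (u₂, T2 p)
              = (F (u₁, T1 p) - F (u₂, T1 p)) + (F (u₂, T1 p) - F (u₂, T2 p)) := by abel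
          rw [this]; exact norm_add_le _ _
      _ ≤ _ := add_le_add e1 e2
  -- integrate the bound
  have intg : ∀ i : Fin m, Integrable (fun p : Fin m → (E d) × (E d) => g (p i)) πκ :=
    fun i => ⟨(hgc.comp (by fun_prop)).aestronglyMeasurable,
      HasFiniteIntegral.of_bounded (ae_of_all _ fun p => by
        rw [Real.norm_of_nonneg (hg0 _)]; exact hg1 _)⟩
  have intbound : Integrable (fun p : Fin m → (E d) × (E d) =>
      L * ‖u₁ - u₂‖ + (2*L + 4*M) * ∑ i : Fin m, g (p i)) πκ := by
    exact (integrable_const _).add (((integrable_finset_sum _ fun i _ => intg i).const_mul _))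
  have step1 := norm_integral_le_integral_norm (fun p => F (u₁, T1 p) - F (u₂, T2 p)) (μ := πκ)
  refine le_trans step1 (le_trans (integral_mono ((int1.sub int2).norm) intbound hpt) ?_)
  rw [integral_add (integrable_const _) ((integrable_finset_sum _ fun i _ => intg i).const_mul _),
    integral_const, integral_const_mul, integral_finset_sum _ fun i _ => intg i]
  have heval : ∀ i : Fin m, (∫ p, g (p i) ∂πκ) = ∫ q, g q ∂κ := by
    intro i
    have h := integral_map (μ := πκ) (f := g) (measurable_pi_apply i).aemeasurable
      hgc.aestronglyMeasurable
    rw [← h, hπκ, myPiMapEval]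
  simp only [heval]
  simp only [probReal_univ, ENNReal.toReal_one, one_smul, Finset.sum_const,
    Finset.card_univ, Fintype.card_fin, nsmul_eq_mul]
  apply le_of_eq
  ring

/-- the drift
`a(u,μ) = Σ_{k=1}^n ∫⋯∫ f_k(u, v₁,…,v_k) μ(dv₁)⋯μ(dv_k)` built from bounded
Lipschitz kernels `f_k` is Lipschitz with respect to `|u₁ − u₂| + γ(μ,ν)`:
there is `K > 0` with `|a(u₁,μ) − a(u₂,ν)| ≤ K(|u₁−u₂| + γ(μ,ν))`. -/
theorem drift_lipschitz_in_space_and_measure (d n : ℕ)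
    (f : (k : Fin n) → EuclideanSpace ℝ (Fin d) × (Fin (k.1 + 1) → EuclideanSpace ℝ (Fin d)) →
      EuclideanSpace ℝ (Fin d))
    (M L : ℝ)
    (hbdd : ∀ k x, ‖f k x‖ ≤ M)
    (hlip : ∀ k x y, ‖f k x - f k y‖ ≤ L * dist x y) :
    ∃ K : ℝ, 0 < K ∧
      ∀ (u₁ u₂ : EuclideanSpace ℝ (Fin d)) (μ ν : Measure (EuclideanSpace ℝ (Fin d))),
        IsProbabilityMeasure μ → IsProbabilityMeasure ν →
        ‖(∑ k : Fin n, ∫ v, f k (u₁, v) ∂(Measure.pi fun _ : Fin (k.1 + 1) => μ)) -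
            ∑ k : Fin n, ∫ v, f k (u₂, v) ∂(Measure.pi fun _ : Fin (k.1 + 1) => ν)‖ ≤
          K * (‖u₁ - u₂‖ + gammaDist μ ν) := by
  set L' : ℝ := max L 0 with hL'd
  set M' : ℝ := max M 0 with hM'd
  have hL' : 0 ≤ L' := le_max_right _ _
  have hM' : 0 ≤ M' := le_max_right _ _
  have hbdd' : ∀ k x, ‖f k x‖ ≤ M' := fun k x => (hbdd k x).trans (le_max_left _ _)
  have hlip' : ∀ k x y, ‖f k x - f k y‖ ≤ L' * dist x y := fun k x y =>
    (hlip k x y).trans (mul_le_mul_of_nonneg_right (le_max_left _ _) dist_nonneg)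
  set C : ℝ := 2 * L' + 4 * M' with hCd
  have hC : 0 ≤ C := by positivity
  set K : ℝ := (n : ℝ) * L' + (n : ℝ) * (n : ℝ) * C + 1 with hKd
  have hKpos : 0 < K := by positivity
  refine ⟨K, hKpos, ?_⟩
  intro u₁ u₂ μ ν hμ hν
  haveI := hμ; haveI := hν
  have main : ∀ κ : couplings μ ν,
      ‖(∑ k : Fin n, ∫ v, f k (u₁, v) ∂(Measure.pi fun _ : Fin (k.1 + 1) => μ)) -
          ∑ k : Fin n, ∫ v, f k (u₂, v) ∂(Measure.pi fun _ : Fin (k.1 + 1) => ν)‖ ≤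
        K * ‖u₁ - u₂‖ + K * ∫ p : EuclideanSpace ℝ (Fin d) × EuclideanSpace ℝ (Fin d),
          ‖p.1 - p.2‖ / (1 + ‖p.1 - p.2‖) ∂(κ : Measure _) := by
    rintro ⟨κ, hκprob, hκ1, hκ2⟩
    haveI := hκprob
    set I : ℝ := ∫ p : EuclideanSpace ℝ (Fin d) × EuclideanSpace ℝ (Fin d),
      ‖p.1 - p.2‖ / (1 + ‖p.1 - p.2‖) ∂κ with hId
    have hI : 0 ≤ I := integral_nonneg fun p => by positivity
    have per : ∀ k : Fin n,
        ‖(∫ v, f k (u₁, v) ∂(Measure.pi fun _ : Fin (k.1 + 1) => μ)) -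
            ∫ v, f k (u₂, v) ∂(Measure.pi fun _ : Fin (k.1 + 1) => ν)‖ ≤
          L' * ‖u₁ - u₂‖ + (n : ℝ) * (C * I) := by
      intro k
      refine le_trans (myKey d (k.1 + 1) (f k) M' L' hM' hL' (hbdd' k) (hlip' k)
        u₁ u₂ μ ν κ hκ1 hκ2) ?_
      have hk : ((k.1 + 1 : ℕ) : ℝ) ≤ (n : ℝ) := by exact_mod_cast k.isLt
      refine add_le_add_right (mul_le_mul_of_nonneg_right hk (mul_nonneg hC hI)) _
    calc ‖(∑ k : Fin n, ∫ v, f k (u₁, v) ∂(Measure.pi fun _ : Fin (k.1 + 1) => μ)) -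
            ∑ k : Fin n, ∫ v, f k (u₂, v) ∂(Measure.pi fun _ : Fin (k.1 + 1) => ν)‖
        = ‖∑ k : Fin n, ((∫ v, f k (u₁, v) ∂(Measure.pi fun _ : Fin (k.1 + 1) => μ)) -
            ∫ v, f k (u₂, v) ∂(Measure.pi fun _ : Fin (k.1 + 1) => ν))‖ := by
          rw [Finset.sum_sub_distrib]
      _ ≤ ∑ k : Fin n, ‖(∫ v, f k (u₁, v) ∂(Measure.pi fun _ : Fin (k.1 + 1) => μ)) -
            ∫ v, f k (u₂, v) ∂(Measure.pi fun _ : Fin (k.1 + 1) => ν)‖ := norm_sum_le _ _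
      _ ≤ ∑ _k : Fin n, (L' * ‖u₁ - u₂‖ + (n : ℝ) * (C * I)) :=
          Finset.sum_le_sum fun k _ => per k
      _ = (n : ℝ) * (L' * ‖u₁ - u₂‖ + (n : ℝ) * (C * I)) := by
          rw [Finset.sum_const, Finset.card_univ, Fintype.card_fin, nsmul_eq_mul]
      _ ≤ K * ‖u₁ - u₂‖ + K * I := by
          have h1 : (n : ℝ) * L' ≤ K := by
            have : (0:ℝ) ≤ (n : ℝ) * (n : ℝ) * C := by positivity
            rw [hKd]; linarith
          have h2 : (n : ℝ) * (n : ℝ) * C ≤ K := by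
            have : (0:ℝ) ≤ (n : ℝ) * L' := by positivity
            rw [hKd]; linarith
          nlinarith [mul_le_mul_of_nonneg_right h1 (norm_nonneg (u₁ - u₂)),
            mul_le_mul_of_nonneg_right h2 hI]
  haveI hne : Nonempty (couplings μ ν) := by
    refine ⟨⟨μ.prod ν, ?_, ?_, ?_⟩⟩
    · infer_instance
    · rw [Measure.map_fst_prod]; simp
    · rw [Measure.map_snd_prod]; simp
  have hdiv : ∀ κ : couplings μ ν,
      (‖(∑ k : Fin n, ∫ v, f k (u₁, v) ∂(Measure.pi fun _ : Fin (k.1 + 1) => μ)) -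
          ∑ k : Fin n, ∫ v, f k (u₂, v) ∂(Measure.pi fun _ : Fin (k.1 + 1) => ν)‖
        - K * ‖u₁ - u₂‖) / K ≤
      ∫ p : EuclideanSpace ℝ (Fin d) × EuclideanSpace ℝ (Fin d),
        ‖p.1 - p.2‖ / (1 + ‖p.1 - p.2‖) ∂(κ : Measure _) := by
    intro κ
    rw [div_le_iff₀ hKpos]
    have := main κ
    nlinarith [this]
  have hγ : (‖(∑ k : Fin n, ∫ v, f k (u₁, v) ∂(Measure.pi fun _ : Fin (k.1 + 1) => μ)) -
          ∑ k : Fin n, ∫ v, f k (u₂, v) ∂(Measure.pi fun _ : Fin (k.1 + 1) => ν)‖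
        - K * ‖u₁ - u₂‖) / K ≤ gammaDist μ ν := le_ciInf hdiv
  rw [div_le_iff₀ hKpos] at hγ
  nlinarith [hγ]
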